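/- arXiv:1811.01736 — 10 statements merged into one kernel-verified Lean document; each statement's English description precedes it below -/
import Mathlib

section
/- If S is a supercharacter theory of a finite group G and N, H are S-normal subgroups (unions of S-classes that are subgroups), then both H ∩ N and HN are S-normal subgroups of G. -/
open scoped Pointwise

/-- The combinatorial data of a supercharacter theory of a group `G`:
the partition of `G` into superclasses, encoded by the map sending `g`
to its `S`-class `cl g`.  The parts are unions of conjugacy classes,
`{1}` is a part, parts are closed under inversion, and a product of two
parts is a union of parts (the set-theoretic shadow of the fact that
products of superclass sums are nonnegative integer combinations of
superclass sums). -/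
structure SCT (G : Type*) [Group G] where
  cl : G → Set G
  mem_cl : ∀ g : G, g ∈ cl g
  cl_eq_of_mem : ∀ {g h : G}, h ∈ cl g → cl h = cl g
  cl_one : cl 1 = {1}
  conj_mem : ∀ {g k : G} (x : G), k ∈ cl g → x * k * x⁻¹ ∈ cl g
  cl_inv : ∀ {g k : G}, k ∈ cl g → k⁻¹ ∈ cl g⁻¹
  cl_mul_subset : ∀ {g h k : G}, k ∈ cl g * cl h → cl k ⊆ cl g * cl h

namespace SCT

variable {G : Type*} [Group G]

/-- A subgroup is `S`-normal if it is a union of `S`-classes. -/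
def IsSNormal (S : SCT G) (N : Subgroup G) : Prop :=
  ∀ g ∈ N, S.cl g ⊆ (N : Set G)

/-- `[A, S]`: the subgroup generated by the elements `g⁻¹ * k` with `g ∈ A`
and `k` in the `S`-class of `g`. -/
def comm (S : SCT G) (A : Set G) : Subgroup G :=
  Subgroup.closure {x : G | ∃ g ∈ A, ∃ k ∈ S.cl g, x = g⁻¹ * k}

end SCT

theorem intersection_and_product_SNormal {G : Type*} [Group G] [Finite G]
    (S : SCT G) (H N : Subgroup G) (hH : S.IsSNormal H) (hN : S.IsSNormal N) :
    S.IsSNormal (H ⊓ N) ∧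
      ∃ P : Subgroup G, (P : Set G) = (H : Set G) * (N : Set G) ∧ S.IsSNormal P := by
  constructor
  · intro g hg x hx
    exact ⟨hH g hg.1 hx, hN g hg.2 hx⟩
  · haveI : N.Normal := ⟨fun n hn x => hN n hn (S.conj_mem x (S.mem_cl n))⟩
    refine ⟨H ⊔ N, Subgroup.mul_normal H N, ?_⟩
    intro g hg
    have key : ((H ⊔ N : Subgroup G) : Set G) = (H : Set G) * N := Subgroup.mul_normal H N
    rw [key]
    have hg' : g ∈ (H : Set G) * N := key ▸ hg
    obtain ⟨h, hh, n, hn, rfl⟩ := hg'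
    have h1 : h * n ∈ S.cl h * S.cl n := ⟨h, S.mem_cl h, n, S.mem_cl n, rfl⟩
    exact (S.cl_mul_subset h1).trans (Set.mul_subset_mul (hH h hh) (hN n hn))
end

section
/- Let S be a supercharacter theory of a finite group G, with S-characters σ_X = Σ_{ψ∈X} ψ(1)ψ for X in the partition of Irr(G). For any two elements g, h ∈ G, the sum Σ_{χ ∈ Ch(S)} χ(g)·conj(χ(h))/χ(1) equals |G|/|cl_S(g)| if h lies in the same S-class as g, and equals 0 otherwise. -/
open scoped Pointwise BigOperators

/-- A supercharacter theory of a finite group `G`, together with its character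
theoretic data: `Irr` is the set of irreducible characters of `G` (axiomatized by
its standard properties: orthogonality, positive integer degrees, invariance under
conjugation, behaviour under inversion, maximality of the value at `1`, and the sum
of the squares of the degrees being `|G|`), and `parts` is a partition of `Irr`
whose associated supercharacters `σ_X = ∑_{ψ ∈ X} ψ(1)·ψ` are constant on the
`S`-classes, with as many parts as there are `S`-classes. -/
structure SCTc (G : Type*) [Group G] [Fintype G] extends SCT G where
  Irr : Finset (G → ℂ)
  parts : Finset (Finset (G → ℂ))
  parts_nonempty : ∀ X ∈ parts, X.Nonempty
  parts_subset : ∀ X ∈ parts, X ⊆ Irr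
  parts_cover : ∀ ψ ∈ Irr, ∃ X ∈ parts, ψ ∈ X
  parts_disjoint : ∀ X ∈ parts, ∀ Y ∈ parts, ∀ ψ : G → ℂ, ψ ∈ X → ψ ∈ Y → X = Y
  irr_orth : ∀ ψ ∈ Irr, ∀ φ ∈ Irr,
    ∑ g : G, ψ g * (starRingEnd ℂ) (φ g) =
      if ψ = φ then (Fintype.card G : ℂ) else 0
  irr_deg : ∀ ψ ∈ Irr, ∃ n : ℕ, 0 < n ∧ ψ 1 = (n : ℂ)
  irr_conj_invariant : ∀ ψ ∈ Irr, ∀ g x : G, ψ (x * g * x⁻¹) = ψ g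
  irr_inv : ∀ ψ ∈ Irr, ∀ g : G, ψ g⁻¹ = (starRingEnd ℂ) (ψ g)
  irr_abs_le : ∀ ψ ∈ Irr, ∀ g : G, ‖ψ g‖ ≤ ‖ψ 1‖
  sum_sq_deg : ∑ ψ ∈ Irr, ψ 1 * ψ 1 = (Fintype.card G : ℂ)
  card_parts : Set.ncard (Set.range cl) = parts.card
  superchar_const : ∀ X ∈ parts, ∀ g k : G, k ∈ cl g →
    ∑ ψ ∈ X, ψ 1 * ψ k = ∑ ψ ∈ X, ψ 1 * ψ g

namespace SCTc

variable {G : Type*} [Group G] [Fintype G]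

/-- The supercharacter `σ_X = ∑_{ψ ∈ X} ψ(1)·ψ` attached to a part `X`. -/
noncomputable def sigma (S : SCTc G) (X : Finset (G → ℂ)) (g : G) : ℂ :=
  ∑ ψ ∈ X, ψ 1 * ψ g

lemma sigma_const (S : SCTc G) {X : Finset (G → ℂ)} (hX : X ∈ S.parts) {g k : G}
    (hk : k ∈ S.cl g) : S.sigma X k = S.sigma X g :=
  S.superchar_const X hX g k hk

lemma sigma_one_ne_zero (S : SCTc G) {X : Finset (G → ℂ)} (hX : X ∈ S.parts) :
    S.sigma X 1 ≠ 0 := by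
  have hterm : ∀ ψ ∈ X, 1 ≤ (ψ 1 * ψ 1).re := by
    intro ψ hψ
    obtain ⟨n, hn, he⟩ := S.irr_deg ψ (S.parts_subset X hX hψ)
    rw [he]
    have : ((n : ℂ) * (n : ℂ)) = ((n * n : ℕ) : ℂ) := by push_cast; ring
    rw [this, Complex.natCast_re]
    exact_mod_cast Nat.one_le_iff_ne_zero.mpr (by positivity)
  have h0 : 0 < (S.sigma X 1).re := by
    have hre : (S.sigma X 1).re = ∑ ψ ∈ X, (ψ 1 * ψ 1).re := Complex.re_sum X _
    have h1 : (X.card : ℝ) ≤ ∑ ψ ∈ X, (ψ 1 * ψ 1).re := by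
      calc (X.card : ℝ) = ∑ _ψ ∈ X, (1 : ℝ) := by simp
        _ ≤ _ := Finset.sum_le_sum hterm
    have hc : 0 < X.card := Finset.card_pos.mpr (S.parts_nonempty X hX)
    rw [hre]
    calc (0 : ℝ) < (X.card : ℝ) := by exact_mod_cast hc
      _ ≤ _ := h1
  intro h
  rw [h] at h0
  simp at h0

open scoped Classical in
lemma sigma_row_orth (S : SCTc G) {X Y : Finset (G → ℂ)} (hX : X ∈ S.parts)
    (hY : Y ∈ S.parts) :
    ∑ g : G, S.sigma X g * (starRingEnd ℂ) (S.sigma Y g) =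
      if X = Y then (Fintype.card G : ℂ) * S.sigma X 1 else 0 := by
  have hconj : ∀ φ ∈ S.Irr, (starRingEnd ℂ) (φ 1) = φ 1 := by
    intro φ hφ
    obtain ⟨n, _, he⟩ := S.irr_deg φ hφ
    rw [he]; simp
  have step1 : ∑ g : G, S.sigma X g * (starRingEnd ℂ) (S.sigma Y g)
      = ∑ ψ ∈ X, ∑ φ ∈ Y,
          ψ 1 * (starRingEnd ℂ) (φ 1) * ∑ g : G, ψ g * (starRingEnd ℂ) (φ g) := by
    have e1 : ∀ g : G, S.sigma X g * (starRingEnd ℂ) (S.sigma Y g)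
        = ∑ ψ ∈ X, ∑ φ ∈ Y,
            ψ 1 * (starRingEnd ℂ) (φ 1) * (ψ g * (starRingEnd ℂ) (φ g)) := by
      intro x
      simp only [sigma, map_sum, map_mul]
      rw [Finset.sum_mul_sum]
      exact Finset.sum_congr rfl fun ψ _ => Finset.sum_congr rfl fun φ _ => by ring
    rw [Finset.sum_congr rfl fun x _ => e1 x, Finset.sum_comm]
    refine Finset.sum_congr rfl fun ψ _ => ?_
    rw [Finset.sum_comm]
    refine Finset.sum_congr rfl fun φ _ => ?_
    rw [Finset.mul_sum]
  rw [step1]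
  have step2 : ∀ ψ ∈ X, ∑ φ ∈ Y,
      ψ 1 * (starRingEnd ℂ) (φ 1) * ∑ g : G, ψ g * (starRingEnd ℂ) (φ g)
        = if ψ ∈ Y then ψ 1 * ψ 1 * (Fintype.card G : ℂ) else 0 := by
    intro ψ hψ
    have : ∀ φ ∈ Y, ψ 1 * (starRingEnd ℂ) (φ 1) * ∑ g : G, ψ g * (starRingEnd ℂ) (φ g)
        = if ψ = φ then ψ 1 * φ 1 * (Fintype.card G : ℂ) else 0 := by
      intro φ hφ
      rw [S.irr_orth ψ (S.parts_subset X hX hψ) φ (S.parts_subset Y hY hφ),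
        hconj φ (S.parts_subset Y hY hφ)]
      by_cases h : ψ = φ
      · rw [if_pos h, if_pos h]
      · rw [if_neg h, if_neg h, mul_zero]
    rw [Finset.sum_congr rfl this, Finset.sum_ite_eq Y ψ
      (fun φ => ψ 1 * φ 1 * (Fintype.card G : ℂ))]
  rw [Finset.sum_congr rfl step2]
  by_cases hXY : X = Y
  · subst hXY
    rw [if_pos rfl]
    rw [Finset.sum_congr rfl (fun ψ hψ => if_pos hψ), ← Finset.sum_mul]
    rw [mul_comm]
    rfl
  · rw [if_neg hXY]
    refine Finset.sum_eq_zero fun ψ hψ => ?_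
    rw [if_neg]
    intro hψY
    exact hXY (S.parts_disjoint X hX Y hY ψ hψ hψY)

end SCTc

open scoped Classical in
/-- Column orthogonality for supercharacters. -/
theorem supercharacter_column_orthogonality {G : Type*} [Group G] [Fintype G]
    (S : SCTc G) (g h : G) :
    ∑ X ∈ S.parts, S.sigma X g * (starRingEnd ℂ) (S.sigma X h) / S.sigma X 1 =
      if h ∈ S.cl g then (Fintype.card G : ℂ) / (Nat.card (S.cl g) : ℂ) else 0 := by
    classical
  set R : Finset (Set G) := Finset.univ.image S.cl with hRdef
  have hmemR : ∀ x : G, S.cl x ∈ R := fun x =>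
    Finset.mem_image_of_mem S.cl (Finset.mem_univ x)
  have hrep : ∀ C ∈ R, ∃ x : G, S.cl x = C := by
    intro C hC
    simp only [hRdef, Finset.mem_image, Finset.mem_univ, true_and] at hC
    exact hC
  choose rep hrepcl using hrep
  -- class as a fiber of cl
  have hCset : ∀ (C : Set G) (hC : C ∈ R),
      C = ↑(Finset.univ.filter (fun x => S.cl x = C)) := by
    intro C hC
    ext x
    simp only [Finset.coe_filter, Finset.mem_univ, true_and, Set.mem_setOf_eq]
    constructor
    · intro hx
      rw [← hrepcl C hC] at hx
      rw [S.cl_eq_of_mem hx, hrepcl C hC]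
    · intro hx
      rw [← hx]; exact S.mem_cl x
  set N : ↥R → ℂ := fun C =>
    ((Finset.univ.filter (fun x => S.cl x = (C : Set G))).card : ℂ) with hNdef
  set rp : ↥R → G := fun C => rep ↑C C.2 with hrpdef
  have hrpcl : ∀ C : ↥R, S.cl (rp C) = ↑C := fun C => hrepcl ↑C C.2
  -- sum over G as a sum over classes
  have hsum_classes : ∀ F : G → ℂ, (∀ g' k : G, k ∈ S.cl g' → F k = F g') →
      ∑ x : G, F x = ∑ C : ↥R, N C * F (rp C) := by
    intro F hF
    have h1 : ∀ C : ↥R, N C * F (rp C)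
        = ∑ x ∈ Finset.univ.filter (fun x => S.cl x = (C : Set G)), F x := by
      intro C
      have : ∀ x ∈ Finset.univ.filter (fun x => S.cl x = (C : Set G)),
          F x = F (rp C) := by
        intro x hx
        simp only [Finset.mem_filter, Finset.mem_univ, true_and] at hx
        apply hF
        rw [hrpcl C, ← hx]
        exact S.mem_cl x
      rw [Finset.sum_congr rfl this, Finset.sum_const, nsmul_eq_mul, hNdef]
    rw [Finset.sum_congr rfl fun C _ => h1 C]
    rw [Finset.sum_coe_sort R (fun C => ∑ x ∈ Finset.univ.filter (fun x => S.cl x = C), F x)]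
    rw [Finset.sum_fiberwise_of_maps_to (fun x _ => hmemR x) F]
  -- the equivalence between classes and parts
  have hRcard : Fintype.card ↥R = Fintype.card ↥S.parts := by
    have h1 : Set.range S.cl = ↑R := by
      simp [hRdef]
    have h2 := S.card_parts
    rw [h1, Set.ncard_coe_finset] at h2
    simp [Fintype.card_coe, h2]
  let e : ↥R ≃ ↥S.parts := Fintype.equivOfCardEq hRcard
  set A : Matrix ↥R ↥R ℂ := fun C D =>
    S.sigma ↑(e C) (rp D) * N D / S.sigma ↑(e C) 1 with hAdef
  set B : Matrix ↥R ↥R ℂ := fun D C =>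
    (starRingEnd ℂ) (S.sigma ↑(e C) (rp D)) / (Fintype.card G : ℂ) with hBdef
  have hGne : (Fintype.card G : ℂ) ≠ 0 := Nat.cast_ne_zero.mpr Fintype.card_ne_zero
  have hAB : A * B = 1 := by
    ext C C'
    have hconst : ∀ g' k : G, k ∈ S.cl g' →
        S.sigma ↑(e C) k * (starRingEnd ℂ) (S.sigma ↑(e C') k)
          = S.sigma ↑(e C) g' * (starRingEnd ℂ) (S.sigma ↑(e C') g') := by
      intro g' k hk
      rw [S.sigma_const (e C).2 hk, S.sigma_const (e C').2 hk]
    have key := hsum_classes _ hconst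
    have horth := S.sigma_row_orth (e C).2 (e C').2
    have hne1 : S.sigma ↑(e C) 1 ≠ 0 := S.sigma_one_ne_zero (e C).2
    simp only [Matrix.mul_apply, Matrix.one_apply, hAdef, hBdef]
    calc ∑ D, S.sigma ↑(e C) (rp D) * N D / S.sigma ↑(e C) 1 *
            ((starRingEnd ℂ) (S.sigma ↑(e C') (rp D)) / (Fintype.card G : ℂ))
        = (∑ D, N D * (S.sigma ↑(e C) (rp D) * (starRingEnd ℂ) (S.sigma ↑(e C') (rp D))))
            / (S.sigma ↑(e C) 1 * (Fintype.card G : ℂ)) := by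
          rw [Finset.sum_div]
          exact Finset.sum_congr rfl fun D _ => by ring
      _ = (if (↑(e C) : Finset (G → ℂ)) = ↑(e C')
            then (Fintype.card G : ℂ) * S.sigma ↑(e C) 1 else 0)
            / (S.sigma ↑(e C) 1 * (Fintype.card G : ℂ)) := by rw [← key, horth]
      _ = if C = C' then 1 else 0 := by
          by_cases hcc : C = C'
          · rw [if_pos hcc, if_pos (by rw [hcc]), mul_comm]
            field_simp
          · rw [if_neg hcc, if_neg, zero_div]
            intro hh
            exact hcc (e.injective (Subtype.ext hh))
  have hBA : B * A = 1 := mul_eq_one_comm.mp hAB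
  -- evaluate at the classes of h and g
  set Cg : ↥R := ⟨S.cl g, hmemR g⟩ with hCgdef
  set Ch : ↥R := ⟨S.cl h, hmemR h⟩ with hChdef
  have hgmem : g ∈ S.cl (rp Cg) := by rw [hrpcl Cg]; exact S.mem_cl g
  have hhmem : h ∈ S.cl (rp Ch) := by rw [hrpcl Ch]; exact S.mem_cl h
  have hBAev := Matrix.ext_iff.mpr hBA Ch Cg
  simp only [Matrix.mul_apply, Matrix.one_apply] at hBAev
  simp only [hAdef, hBdef] at hBAev
  -- rewrite the entry
  have hterm : ∀ C : ↥R,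
      (starRingEnd ℂ) (S.sigma ↑(e C) (rp Ch)) / (Fintype.card G : ℂ) *
        (S.sigma ↑(e C) (rp Cg) * N Cg / S.sigma ↑(e C) 1)
      = N Cg / (Fintype.card G : ℂ) *
          (S.sigma ↑(e C) g * (starRingEnd ℂ) (S.sigma ↑(e C) h) / S.sigma ↑(e C) 1) := by
    intro C
    rw [show S.sigma ↑(e C) g = S.sigma ↑(e C) (rp Cg) from S.sigma_const (e C).2 hgmem,
      show S.sigma ↑(e C) h = S.sigma ↑(e C) (rp Ch) from S.sigma_const (e C).2 hhmem]
    ring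
  rw [Finset.sum_congr rfl fun C _ => hterm C, ← Finset.mul_sum] at hBAev
  have hsum_eq : ∑ C : ↥R,
      S.sigma ↑(e C) g * (starRingEnd ℂ) (S.sigma ↑(e C) h) / S.sigma ↑(e C) 1
      = ∑ X ∈ S.parts, S.sigma X g * (starRingEnd ℂ) (S.sigma X h) / S.sigma X 1 := by
    rw [Equiv.sum_comp e (fun X : ↥S.parts =>
      S.sigma ↑X g * (starRingEnd ℂ) (S.sigma ↑X h) / S.sigma ↑X 1)]
    exact Finset.sum_coe_sort S.parts
      (fun X => S.sigma X g * (starRingEnd ℂ) (S.sigma X h) / S.sigma X 1)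
  rw [hsum_eq] at hBAev
  -- N Cg is the cardinality of cl g
  have hNCg : N Cg = (Nat.card (S.cl g) : ℂ) := by
    have hcardnat : Nat.card (S.cl g)
        = (Finset.univ.filter (fun x => S.cl x = S.cl g)).card := by
      rw [Nat.card_coe_set_eq]
      conv_lhs => rw [hCset (S.cl g) (hmemR g)]
      rw [Set.ncard_coe_finset]
    rw [hcardnat]
  have hNpos : 0 < Nat.card (S.cl g) := by
    have : Nonempty (S.cl g) := ⟨⟨g, S.mem_cl g⟩⟩
    exact Nat.card_pos
  have hNne' : (Nat.card (S.cl g) : ℂ) ≠ 0 := by exact_mod_cast hNpos.ne'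
  -- conclude
  have hcond : (h ∈ S.cl g) ↔ Ch = Cg := by
    constructor
    · intro hh; exact Subtype.ext (S.cl_eq_of_mem hh)
    · intro hh
      have : S.cl h = S.cl g := congrArg Subtype.val hh
      rw [← this]; exact S.mem_cl h
  by_cases hc : h ∈ S.cl g
  · rw [if_pos hc]
    rw [if_pos (hcond.mp hc), hNCg, div_mul_eq_mul_div, div_eq_iff hGne, one_mul] at hBAev
    rw [eq_div_iff hNne']
    linear_combination hBAev
  · rw [if_neg hc]
    rw [if_neg (fun hh => hc (hcond.mpr hh)), hNCg] at hBAev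
    rcases mul_eq_zero.mp hBAev with h1 | h2
    · exact absurd h1 (div_ne_zero hNne' hGne)
    · exact h2
end

section
/- Let S be a supercharacter theory of a finite group G and let Z(S) = {g ∈ G : the S-class of g is {g}}. Then Z(S) is a normal subgroup of G, and for every z ∈ Z(S) and g ∈ G, the set z·cl_S(g) equals cl_S(zg). -/
open scoped Pointwise

lemma SCT.cl_inv_singleton {G : Type*} [Group G] (S : SCT G) {z : G}
    (hz : S.cl z = {z}) : S.cl z⁻¹ = {z⁻¹} := by
  ext k
  constructor
  · intro hk
    have hk' := S.cl_inv hk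
    rw [inv_inv, hz] at hk'
    simp only [Set.mem_singleton_iff] at hk' ⊢
    rw [← inv_inv k, hk']
  · rintro rfl
    exact S.mem_cl _

lemma SCT.cl_mul_subset_smul {G : Type*} [Group G] (S : SCT G) {z : G} (g : G)
    (hz : S.cl z = {z}) : S.cl (z * g) ⊆ z • S.cl g := by
  have hmem : z * g ∈ S.cl z * S.cl g :=
    Set.mul_mem_mul (by rw [hz]; exact rfl) (S.mem_cl g)
  have h := S.cl_mul_subset hmem
  rw [hz, Set.singleton_mul] at h
  intro x hx
  exact h hx

lemma SCT.smul_cl {G : Type*} [Group G] (S : SCT G) (z g : G)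
    (hz : S.cl z = {z}) : z • S.cl g = S.cl (z * g) := by
  apply Set.Subset.antisymm
  · rw [Set.smul_set_subset_iff_subset_inv_smul_set]
    have h := S.cl_mul_subset_smul (z * g) (S.cl_inv_singleton hz)
    rwa [inv_mul_cancel_left] at h
  · exact S.cl_mul_subset_smul g hz


def SCT.scenter {G : Type*} [Group G] (S : SCT G) : Subgroup G where
  carrier := {g : G | S.cl g = {g}}
  one_mem' := S.cl_one
  mul_mem' := by
    intro a b ha hb
    show S.cl (a * b) = {a * b}
    rw [← S.smul_cl a b ha, hb, Set.smul_set_singleton, smul_eq_mul]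
  inv_mem' := by
    intro a ha
    exact S.cl_inv_singleton ha

theorem center_normal_and_translates {G : Type*} [Group G] [Finite G] (S : SCT G) :
    (∃ Z : Subgroup G, Z.Normal ∧ (Z : Set G) = {g : G | S.cl g = {g}}) ∧
      ∀ z g : G, S.cl z = {z} → z • S.cl g = S.cl (z * g) := by
  constructor
  · refine ⟨S.scenter, ?_, rfl⟩
    constructor
    intro n hn g
    have h := S.conj_mem g (S.mem_cl n)
    rw [hn, Set.mem_singleton_iff] at h
    show S.cl (g * n * g⁻¹) = {g * n * g⁻¹}
    rw [h]; exact hn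
  · intro z g hz
    exact S.smul_cl z g hz
end

section
/- Let S be a supercharacter theory of a finite group G. Then Z(S) = ∩_{χ ∈ Ch(S)} Z(χ), where Z(χ) = {g ∈ G : |χ(g)| = χ(1)} is the center of the character χ. -/
open scoped Pointwise BigOperators

namespace SCTc

variable {G : Type*} [Group G] [Fintype G]

variable (S : SCTc G)

lemma deg_real {ψ : G → ℂ} (hψ : ψ ∈ S.Irr) : ψ 1 = ((ψ 1).re : ℂ) ∧ 0 < (ψ 1).re := by
  obtain ⟨n, hn, h⟩ := S.irr_deg ψ hψ
  rw [h]
  norm_num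
  exact hn

lemma sum_Irr (f : (G → ℂ) → ℂ) :
    ∑ ψ ∈ S.Irr, f ψ = ∑ X ∈ S.parts, ∑ ψ ∈ X, f ψ := by
  have h1 : S.Irr = S.parts.biUnion id := by
    ext ψ
    simp only [Finset.mem_biUnion, id]
    exact ⟨fun h => S.parts_cover ψ h, fun ⟨X, hX, hψ⟩ => S.parts_subset X hX hψ⟩
  have hd : (↑S.parts : Set (Finset (G → ℂ))).PairwiseDisjoint id :=
    fun X hX Y hY hXY => Finset.disjoint_left.mpr fun ψ hX' hY' =>
      hXY (S.parts_disjoint _ hX _ hY ψ hX' hY')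
  rw [h1, Finset.sum_biUnion hd]
  rfl

lemma sigma_one_real {X : Finset (G → ℂ)} (hX : X ∈ S.parts) :
    S.sigma X 1 = ((S.sigma X 1).re : ℂ) ∧ 0 < (S.sigma X 1).re := by
  have h : S.sigma X 1 = ((∑ ψ ∈ X, (ψ 1).re * (ψ 1).re : ℝ) : ℂ) := by
    rw [sigma, Complex.ofReal_sum]
    refine Finset.sum_congr rfl fun ψ hψ => ?_
    have h1 := (S.deg_real (S.parts_subset X hX hψ)).1
    calc ψ 1 * ψ 1 = ((ψ 1).re : ℂ) * ((ψ 1).re : ℂ) := by rw [← h1]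
      _ = (((ψ 1).re * (ψ 1).re : ℝ) : ℂ) := by push_cast; ring
  constructor
  · rw [h]; simp
  · rw [h]
    simp only [Complex.ofReal_re]
    obtain ⟨ψ₀, hψ₀⟩ := S.parts_nonempty X hX
    have := (S.deg_real (S.parts_subset X hX hψ₀)).2
    refine Finset.sum_pos' (fun ψ hψ => ?_) ⟨ψ₀, hψ₀, by positivity⟩
    have := (S.deg_real (S.parts_subset X hX hψ)).2
    positivity

lemma abs_sigma_le {X : Finset (G → ℂ)} (hX : X ∈ S.parts) (g : G) :
    ‖S.sigma X g‖ ≤ (S.sigma X 1).re := by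
  have h1 : ‖S.sigma X g‖ ≤ ∑ ψ ∈ X, (ψ 1).re * (ψ 1).re := by
    refine le_trans (norm_sum_le _ _) (Finset.sum_le_sum fun ψ hψ => ?_)
    have hmem := S.parts_subset X hX hψ
    obtain ⟨h1, h2⟩ := S.deg_real hmem
    have habs1 : ‖ψ 1‖ = (ψ 1).re := by
      rw [h1]; simp [abs_of_pos h2]
    calc ‖ψ 1 * ψ g‖ = ‖ψ 1‖ * ‖ψ g‖ := norm_mul _ _
      _ ≤ (ψ 1).re * (ψ 1).re := by
          rw [habs1]
          exact mul_le_mul_of_nonneg_left (le_trans (S.irr_abs_le ψ hmem g) habs1.le) h2.le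
  have h2 : (S.sigma X 1).re = ∑ ψ ∈ X, (ψ 1).re * (ψ 1).re := by
    rw [sigma, Complex.re_sum]
    refine Finset.sum_congr rfl fun ψ hψ => ?_
    rw [(S.deg_real (S.parts_subset X hX hψ)).1]
    push_cast
    simp
  rw [h2]; exact h1

lemma sigma_orth {X Y : Finset (G → ℂ)} (hX : X ∈ S.parts) (hY : Y ∈ S.parts) :
    ∑ g : G, S.sigma X g * (starRingEnd ℂ) (S.sigma Y g) =
      if X = Y then (Fintype.card G : ℂ) * S.sigma X 1 else 0 := by
  have key : ∑ g : G, S.sigma X g * (starRingEnd ℂ) (S.sigma Y g) =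
      ∑ ψ ∈ X, ∑ φ ∈ Y, (ψ 1 * (starRingEnd ℂ) (φ 1)) *
        (if ψ = φ then (Fintype.card G : ℂ) else 0) := by
    have step : ∀ g : G, S.sigma X g * (starRingEnd ℂ) (S.sigma Y g) =
        ∑ ψ ∈ X, ∑ φ ∈ Y, (ψ 1 * (starRingEnd ℂ) (φ 1)) * (ψ g * (starRingEnd ℂ) (φ g)) := by
      intro g
      rw [sigma, sigma, map_sum, Finset.sum_mul_sum]
      refine Finset.sum_congr rfl fun ψ _ => Finset.sum_congr rfl fun φ _ => ?_
      rw [map_mul]; ring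
    rw [Finset.sum_congr rfl fun g _ => step g, Finset.sum_comm]
    refine Finset.sum_congr rfl fun ψ hψ => ?_
    rw [Finset.sum_comm]
    refine Finset.sum_congr rfl fun φ hφ => ?_
    rw [← Finset.mul_sum, S.irr_orth ψ (S.parts_subset X hX hψ) φ (S.parts_subset Y hY hφ)]
  rw [key]
  by_cases hXY : X = Y
  · subst hXY
    rw [if_pos rfl]
    have : ∀ ψ ∈ X, ∑ φ ∈ X, (ψ 1 * (starRingEnd ℂ) (φ 1)) *
        (if ψ = φ then (Fintype.card G : ℂ) else 0) = (Fintype.card G : ℂ) * (ψ 1 * ψ 1) := by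
      intro ψ hψ
      rw [Finset.sum_eq_single ψ]
      · rw [if_pos rfl]
        have := (S.deg_real (S.parts_subset X hX hψ)).1
        rw [show (starRingEnd ℂ) (ψ 1) = ψ 1 by rw [this]; simp]
        ring
      · intro φ _ hne
        rw [if_neg (Ne.symm hne).elim, mul_zero]
      · intro h; exact absurd hψ h
    rw [Finset.sum_congr rfl this, ← Finset.mul_sum, sigma]
  · rw [if_neg hXY]
    refine Finset.sum_eq_zero fun ψ hψ => Finset.sum_eq_zero fun φ hφ => ?_
    have : ψ ≠ φ := fun h => hXY (S.parts_disjoint X hX Y hY ψ hψ (h ▸ hφ))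
    rw [if_neg this, mul_zero]

lemma card_eq_sum_sigma_one :
    (Fintype.card G : ℂ) = ∑ X ∈ S.parts, S.sigma X 1 := by
  rw [← S.sum_sq_deg, S.sum_Irr (fun ψ => ψ 1 * ψ 1)]
  rfl


/-- If `|σ_X(g)| = σ_X(1)` then every `ψ ∈ X` satisfies `σ_X(1) * ψ(g) = σ_X(g) * ψ(1)`. -/
lemma key_align {X : Finset (G → ℂ)} (hX : X ∈ S.parts) {g : G}
    (h : (‖S.sigma X g‖ : ℂ) = S.sigma X 1) :
    ∀ ψ ∈ X, S.sigma X 1 * ψ g = S.sigma X g * ψ 1 := by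
  set a := S.sigma X g with ha
  set m := (S.sigma X 1).re with hm
  obtain ⟨hreal, hmpos⟩ := S.sigma_one_real hX
  have habs : ‖a‖ = m := by
    have := h.trans hreal
    exact_mod_cast this
  -- t ψ = (conj a * (ψ 1 * ψ g)).re
  have hsum : ∑ ψ ∈ X, ((starRingEnd ℂ) a * (ψ 1 * ψ g)).re = m ^ 2 := by
    have : ∑ ψ ∈ X, ((starRingEnd ℂ) a * (ψ 1 * ψ g)).re
        = ((starRingEnd ℂ) a * S.sigma X g).re := by
      rw [sigma, Finset.mul_sum, Complex.re_sum]
    rw [this, ← ha, mul_comm, Complex.mul_conj]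
    rw [Complex.normSq_eq_norm_sq, habs]
    push_cast
    simp [sq]
  have hle : ∀ ψ ∈ X, ((starRingEnd ℂ) a * (ψ 1 * ψ g)).re ≤ m * ((ψ 1).re * (ψ 1).re) := by
    intro ψ hψ
    obtain ⟨h1, h2⟩ := S.deg_real (S.parts_subset X hX hψ)
    have habsψ1 : ‖ψ 1‖ = (ψ 1).re := by rw [h1]; simp [abs_of_pos h2]
    calc ((starRingEnd ℂ) a * (ψ 1 * ψ g)).re
        ≤ ‖(starRingEnd ℂ) a * (ψ 1 * ψ g)‖ := Complex.re_le_norm _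
      _ = m * (‖ψ 1‖ * ‖ψ g‖) := by
          rw [norm_mul, norm_mul, Complex.norm_conj, habs]
      _ ≤ m * ((ψ 1).re * (ψ 1).re) := by
          refine mul_le_mul_of_nonneg_left ?_ (by positivity)
          rw [habsψ1]
          exact mul_le_mul_of_nonneg_left
            (le_trans (S.irr_abs_le ψ (S.parts_subset X hX hψ) g) habsψ1.le) h2.le
  have htot : ∑ ψ ∈ X, m * ((ψ 1).re * (ψ 1).re) = m ^ 2 := by
    rw [← Finset.mul_sum]
    have : ∑ ψ ∈ X, (ψ 1).re * (ψ 1).re = m := by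
      rw [hm, sigma, Complex.re_sum]
      refine Finset.sum_congr rfl fun ψ hψ => ?_
      rw [(S.deg_real (S.parts_subset X hX hψ)).1]
      simp
    rw [this, sq]
  have heach : ∀ ψ ∈ X, ((starRingEnd ℂ) a * (ψ 1 * ψ g)).re = m * ((ψ 1).re * (ψ 1).re) :=
    (Finset.sum_eq_sum_iff_of_le hle).mp (hsum.trans htot.symm)
  intro ψ hψ
  obtain ⟨h1, h2⟩ := S.deg_real (S.parts_subset X hX hψ)
  have habsψ1 : ‖ψ 1‖ = (ψ 1).re := by rw [h1]; simp [abs_of_pos h2]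
  -- z := conj a * ψ g ; Re z = m * d, |z| ≤ m * d
  set z := (starRingEnd ℂ) a * ψ g with hz
  have hre : z.re = m * (ψ 1).re := by
    have := heach ψ hψ
    have hrw : (starRingEnd ℂ) a * (ψ 1 * ψ g) = ((ψ 1).re : ℂ) * z := by
      rw [hz]; nth_rewrite 1 [h1]; ring
    rw [hrw] at this
    have : (((ψ 1).re : ℂ) * z).re = (ψ 1).re * z.re := by simp
    nlinarith [heach ψ hψ, hrw ▸ (rfl : ((starRingEnd ℂ) a * (ψ 1 * ψ g)).re = ((starRingEnd ℂ) a * (ψ 1 * ψ g)).re)]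
  have habsz : ‖z‖ ≤ m * (ψ 1).re := by
    rw [hz, norm_mul, Complex.norm_conj, habs]
    refine mul_le_mul_of_nonneg_left ?_ hmpos.le
    exact le_trans (S.irr_abs_le ψ (S.parts_subset X hX hψ) g) habsψ1.le
  have him : z.im = 0 := by
    have h4 := Complex.sq_norm z
    have h5 : Complex.normSq z = z.re * z.re + z.im * z.im := Complex.normSq_apply z
    nlinarith [Complex.re_le_norm z, norm_nonneg z]
  have hzval : z = ((m * (ψ 1).re : ℝ) : ℂ) := by
    apply Complex.ext
    · simpa using hre
    · simpa using him
  -- now multiply by a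
  have hna : a * (starRingEnd ℂ) a = ((m ^ 2 : ℝ) : ℂ) := by
    rw [Complex.mul_conj, Complex.normSq_eq_norm_sq, habs]
  have hmain : ((m : ℝ) : ℂ) * (((m : ℝ) : ℂ) * ψ g) = ((m : ℝ) : ℂ) * (a * ψ 1) := by
    have : a * z = a * ((m * (ψ 1).re : ℝ) : ℂ) := by rw [hzval]
    rw [hz, ← mul_assoc, hna] at this
    rw [h1]
    push_cast at this ⊢
    linear_combination this
  have hmne : ((m : ℝ) : ℂ) ≠ 0 := by
    simp only [ne_eq, Complex.ofReal_eq_zero]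
    exact hmpos.ne'
  have := mul_left_cancel₀ hmne hmain
  calc S.sigma X 1 * ψ g = ((m : ℝ) : ℂ) * ψ g := by rw [hreal]
    _ = a * ψ 1 := this
    _ = S.sigma X g * ψ 1 := by rw [ha]

lemma eq_singleton {g : G}
    (h : ∀ X ∈ S.parts, (‖S.sigma X g‖ : ℂ) = S.sigma X 1) :
    S.cl g = {g} := by
  classical
  set T : G → ℂ := fun k => ∑ ψ ∈ S.Irr, (starRingEnd ℂ) (ψ g) * ψ k with hT
  -- each part: σX1 * (partial sum) = conj (σX g) * σX h
  have hpart : ∀ X ∈ S.parts, ∀ k : G,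
      S.sigma X 1 * ∑ ψ ∈ X, (starRingEnd ℂ) (ψ g) * ψ k
        = (starRingEnd ℂ) (S.sigma X g) * S.sigma X k := by
    intro X hX k
    calc S.sigma X 1 * ∑ ψ ∈ X, (starRingEnd ℂ) (ψ g) * ψ k
        = ∑ ψ ∈ X, S.sigma X 1 * ((starRingEnd ℂ) (ψ g) * ψ k) := Finset.mul_sum _ _ _
      _ = ∑ ψ ∈ X, (starRingEnd ℂ) (S.sigma X g) * (ψ 1 * ψ k) := ?_
      _ = (starRingEnd ℂ) (S.sigma X g) * S.sigma X k := by
          rw [show S.sigma X k = ∑ ψ ∈ X, ψ 1 * ψ k from rfl, ← Finset.mul_sum]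
    refine Finset.sum_congr rfl fun ψ hψ => ?_
    have halign := S.key_align hX (h X hX) ψ hψ
    have hψr := (S.deg_real (S.parts_subset X hX hψ)).1
    have hσr := (S.sigma_one_real hX).1
    have hc : S.sigma X 1 * (starRingEnd ℂ) (ψ g) = (starRingEnd ℂ) (S.sigma X g) * ψ 1 := by
      have := congrArg (starRingEnd ℂ) halign
      rw [map_mul, map_mul] at this
      rw [show (starRingEnd ℂ) (S.sigma X 1) = S.sigma X 1 by rw [hσr]; simp] at this
      rw [show (starRingEnd ℂ) (ψ 1) = ψ 1 by rw [hψr]; simp] at this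
      exact this
    calc S.sigma X 1 * ((starRingEnd ℂ) (ψ g) * ψ k)
        = (S.sigma X 1 * (starRingEnd ℂ) (ψ g)) * ψ k := by ring
      _ = ((starRingEnd ℂ) (S.sigma X g) * ψ 1) * ψ k := by rw [hc]
      _ = (starRingEnd ℂ) (S.sigma X g) * (ψ 1 * ψ k) := by ring
  -- T is constant on the superclass of g
  have hTconst : ∀ k ∈ S.cl g, T k = T g := by
    intro k hk
    rw [hT]
    simp only
    rw [S.sum_Irr (fun ψ => (starRingEnd ℂ) (ψ g) * ψ k),
        S.sum_Irr (fun ψ => (starRingEnd ℂ) (ψ g) * ψ g)]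
    refine Finset.sum_congr rfl fun X hX => ?_
    have hne : S.sigma X 1 ≠ 0 := by
      obtain ⟨hr, hp⟩ := S.sigma_one_real hX
      rw [hr]
      exact_mod_cast hp.ne'
    apply mul_left_cancel₀ hne
    rw [hpart X hX k, hpart X hX g]
    congr 1
    have := S.superchar_const X hX g k hk
    rw [sigma, sigma, this]
  -- abs ψ g = deg ψ for all ψ, hence T g = |G|
  have hdiag : ∀ ψ ∈ S.Irr, (starRingEnd ℂ) (ψ g) * ψ g = ψ 1 * ψ 1 := by
    intro ψ hψ
    obtain ⟨X, hX, hψX⟩ := S.parts_cover ψ hψ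
    have halign := S.key_align hX (h X hX) ψ hψX
    obtain ⟨hψr, hψp⟩ := S.deg_real hψ
    obtain ⟨hσr, hσp⟩ := S.sigma_one_real hX
    have habsσ : ‖S.sigma X g‖ = (S.sigma X 1).re := by
      have := (h X hX).trans hσr
      exact_mod_cast this
    have habs : ‖ψ g‖ = (ψ 1).re := by
      have := congrArg norm halign
      rw [norm_mul, norm_mul, habsσ] at this
      have h1 : ‖S.sigma X 1‖ = (S.sigma X 1).re := by
        rw [hσr]; simp [abs_of_pos hσp]
      have h2 : ‖ψ 1‖ = (ψ 1).re := by
        rw [hψr]; simp [abs_of_pos hψp]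
      rw [h1, h2] at this
      exact mul_left_cancel₀ hσp.ne' this
    rw [mul_comm, Complex.mul_conj, Complex.normSq_eq_norm_sq, habs, hψr]
    simp [sq]
  have hTg : T g = (Fintype.card G : ℂ) := by
    rw [hT]
    simp only
    rw [Finset.sum_congr rfl hdiag, S.sum_sq_deg]
  -- second moment of T
  have hT2 : ∑ k : G, T k * (starRingEnd ℂ) (T k) = (Fintype.card G : ℂ) ^ 2 := by
    have step : ∀ k : G, T k * (starRingEnd ℂ) (T k) =
        ∑ ψ ∈ S.Irr, ∑ φ ∈ S.Irr,
          ((starRingEnd ℂ) (ψ g) * φ g) * (ψ k * (starRingEnd ℂ) (φ k)) := by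
      intro k
      rw [hT]
      simp only [map_sum, map_mul, Complex.conj_conj]
      rw [Finset.sum_mul_sum]
      refine Finset.sum_congr rfl fun ψ _ => Finset.sum_congr rfl fun φ _ => ?_
      ring
    rw [Finset.sum_congr rfl fun k _ => step k, Finset.sum_comm]
    have : ∀ ψ ∈ S.Irr, ∑ φ ∈ S.Irr, ((starRingEnd ℂ) (ψ g) * φ g) *
        (if ψ = φ then (Fintype.card G : ℂ) else 0)
        = (Fintype.card G : ℂ) * (ψ 1 * ψ 1) := by
      intro ψ hψ
      rw [Finset.sum_eq_single ψ]
      · rw [if_pos rfl, hdiag ψ hψ]; ring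
      · intro φ _ hne; rw [if_neg (Ne.symm hne).elim, mul_zero]
      · intro hc; exact absurd hψ hc
    calc ∑ ψ ∈ S.Irr, ∑ k : G, ∑ φ ∈ S.Irr,
          ((starRingEnd ℂ) (ψ g) * φ g) * (ψ k * (starRingEnd ℂ) (φ k))
        = ∑ ψ ∈ S.Irr, ∑ φ ∈ S.Irr, ((starRingEnd ℂ) (ψ g) * φ g) *
            ∑ k : G, ψ k * (starRingEnd ℂ) (φ k) := by
          refine Finset.sum_congr rfl fun ψ _ => ?_
          rw [Finset.sum_comm]
          exact Finset.sum_congr rfl fun φ _ => by rw [← Finset.mul_sum]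
      _ = ∑ ψ ∈ S.Irr, ∑ φ ∈ S.Irr, ((starRingEnd ℂ) (ψ g) * φ g) *
            (if ψ = φ then (Fintype.card G : ℂ) else 0) := by
          refine Finset.sum_congr rfl fun ψ hψ => Finset.sum_congr rfl fun φ hφ => ?_
          rw [S.irr_orth ψ hψ φ hφ]
      _ = ∑ ψ ∈ S.Irr, (Fintype.card G : ℂ) * (ψ 1 * ψ 1) := Finset.sum_congr rfl this
      _ = (Fintype.card G : ℂ) ^ 2 := by rw [← Finset.mul_sum, S.sum_sq_deg, sq]
  -- conclude
  refine Set.eq_singleton_iff_unique_mem.mpr ⟨S.mem_cl g, fun k hk => ?_⟩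
  by_contra hne
  have hTk : T k = (Fintype.card G : ℂ) := (hTconst k hk).trans hTg
  have hreal : ∑ k : G, Complex.normSq (T k) = (Fintype.card G : ℝ) ^ 2 := by
    have : ((∑ k : G, Complex.normSq (T k) : ℝ) : ℂ) = (Fintype.card G : ℂ) ^ 2 := by
      rw [Complex.ofReal_sum]
      rw [← hT2]
      exact Finset.sum_congr rfl fun k _ => (Complex.mul_conj (T k)).symm
    exact_mod_cast this
  have hpair : Complex.normSq (T g) + Complex.normSq (T k)
      ≤ ∑ k : G, Complex.normSq (T k) := by
    have hsub : ({g, k} : Finset G) ⊆ Finset.univ := Finset.subset_univ _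
    have := Finset.sum_le_sum_of_subset_of_nonneg hsub
      (fun x _ _ => Complex.normSq_nonneg (T x))
    rwa [Finset.sum_pair (fun hgk => hne (hgk.symm))] at this
  have hng : Complex.normSq (T g) = (Fintype.card G : ℝ) ^ 2 := by
    rw [hTg]; simp [Complex.normSq_apply, sq]
  have hnk : Complex.normSq (T k) = (Fintype.card G : ℝ) ^ 2 := by
    rw [hTk]; simp [Complex.normSq_apply, sq]
  have hcard : (0 : ℝ) < (Fintype.card G : ℝ) := by
    exact_mod_cast Fintype.card_pos
  rw [hng, hnk, hreal] at hpair
  nlinarith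

private lemma aux_le {r m c : ℝ} (h0 : 0 ≤ r) (hr : r ≤ m) (hc : 0 ≤ c) :
    r ^ 2 * c ≤ m * (c * m) := by
  have h1 : r * r ≤ m * m := mul_le_mul hr hr h0 (h0.trans hr)
  have h2 : r * r * c ≤ m * m * c := mul_le_mul_of_nonneg_right h1 hc
  nlinarith [h2]

private lemma aux_eq {r m c : ℝ} (h0 : 0 ≤ r) (hm : 0 < m) (hc : 0 < c)
    (h : r ^ 2 * c = m * (c * m)) : r = m := by
  have h1 : r ^ 2 = m ^ 2 := mul_right_cancel₀ hc.ne' (by linear_combination h)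
  calc r = Real.sqrt (r ^ 2) := (Real.sqrt_sq h0).symm
    _ = Real.sqrt (m ^ 2) := by rw [h1]
    _ = m := Real.sqrt_sq hm.le

lemma abs_eq {g : G} (hg : S.cl g = {g}) :
    ∀ X ∈ S.parts, (‖S.sigma X g‖ : ℂ) = S.sigma X 1 := by
  classical
  haveI : Fintype ↥(Set.range S.cl) := Fintype.ofFinite _
  set π : G → ↥(Set.range S.cl) := fun x => ⟨S.cl x, ⟨x, rfl⟩⟩ with hπ
  have hπsurj : Function.Surjective π := by
    rintro ⟨C, x, rfl⟩
    exact ⟨x, rfl⟩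
  set Φ := LinearMap.funLeft ℂ ℂ π with hΦ
  have hΦinj : Function.Injective Φ := LinearMap.funLeft_injective_of_surjective ℂ ℂ π hπsurj
  set V := LinearMap.range Φ with hV
  have hmemV : ∀ f : G → ℂ, (∀ x k : G, k ∈ S.cl x → f k = f x) → f ∈ V := by
    intro f hf
    refine ⟨fun C => f C.2.choose, ?_⟩
    ext x
    show f (π x).2.choose = f x
    have hspec : S.cl ((π x).2.choose) = S.cl x := (π x).2.choose_spec
    have hmem : (π x).2.choose ∈ S.cl x := hspec ▸ S.mem_cl _
    exact hf x _ hmem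
  have hfrV : Module.finrank ℂ ↥V = S.parts.card := by
    rw [hV, LinearMap.finrank_range_of_inj hΦinj, Module.finrank_pi, ← Nat.card_eq_fintype_card,
      Nat.card_coe_set_eq, S.card_parts]
  set v : ↥S.parts → (G → ℂ) := fun X => S.sigma X.1 with hv
  have hvV : ∀ X : ↥S.parts, v X ∈ V := fun X =>
    hmemV _ fun x k hk => S.superchar_const X.1 X.2 x k hk
  have hBexp : ∀ (c : ↥S.parts → ℂ) (Y : ↥S.parts),
      ∑ x : G, (∑ i : ↥S.parts, c i • v i) x * (starRingEnd ℂ) (S.sigma Y.1 x)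
        = c Y * ((Fintype.card G : ℂ) * S.sigma Y.1 1) := by
    intro c Y
    have step : ∀ x : G, (∑ i : ↥S.parts, c i • v i) x * (starRingEnd ℂ) (S.sigma Y.1 x)
        = ∑ i : ↥S.parts, c i * (S.sigma i.1 x * (starRingEnd ℂ) (S.sigma Y.1 x)) := by
      intro x
      rw [Finset.sum_apply, Finset.sum_mul]
      refine Finset.sum_congr rfl fun i _ => ?_
      simp only [Pi.smul_apply, smul_eq_mul, hv]
      ring
    rw [Finset.sum_congr rfl fun x _ => step x, Finset.sum_comm]
    have inner : ∀ i : ↥S.parts,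
        ∑ x : G, c i * (S.sigma i.1 x * (starRingEnd ℂ) (S.sigma Y.1 x))
          = c i * (if i.1 = Y.1 then (Fintype.card G : ℂ) * S.sigma i.1 1 else 0) := by
      intro i
      rw [← Finset.mul_sum, S.sigma_orth i.2 Y.2]
    rw [Finset.sum_congr rfl fun i _ => inner i]
    rw [Finset.sum_eq_single Y]
    · rw [if_pos rfl]
    · intro i _ hne
      rw [if_neg (fun hh => hne (Subtype.ext hh)), mul_zero]
    · intro hc; exact absurd (Finset.mem_univ Y) hc
  have hcard0 : (Fintype.card G : ℂ) ≠ 0 := by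
    exact_mod_cast Fintype.card_pos.ne'
  have hσne : ∀ Y : ↥S.parts, S.sigma Y.1 1 ≠ 0 := by
    intro Y
    obtain ⟨hr, hp⟩ := S.sigma_one_real Y.2
    rw [hr]
    exact_mod_cast hp.ne'
  have hli : LinearIndependent ℂ v := by
    rw [Fintype.linearIndependent_iff]
    intro c hc Y
    have := hBexp c Y
    rw [hc] at this
    simp only [Pi.zero_apply, zero_mul, Finset.sum_const_zero] at this
    rcases mul_eq_zero.mp this.symm with h0 | h0
    · exact h0
    · exact absurd h0 (mul_ne_zero hcard0 (hσne Y))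
  haveI : FiniteDimensional ℂ ↥V := inferInstance
  have hspan : Submodule.span ℂ (Set.range v) = V := by
    apply Submodule.eq_of_le_of_finrank_le
    · rw [Submodule.span_le]
      rintro _ ⟨X, rfl⟩
      exact hvV X
    · rw [hfrV, finrank_span_eq_card hli, Fintype.card_coe]
  set δ : G → ℂ := fun x => if x = g then 1 else 0 with hδ
  have hδV : δ ∈ V := by
    refine hmemV _ fun x k hk => ?_
    by_cases hx : x = g
    · have hkg : k = g := by rw [hx, hg] at hk; exact hk
      simp [hδ, hkg, hx]
    · have hkg : k ≠ g := by
        rintro rfl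
        have h1 : S.cl k = S.cl x := S.cl_eq_of_mem hk
        have h2 : S.cl x = {k} := h1 ▸ hg
        exact hx ((h2 ▸ S.mem_cl x) : x ∈ ({k} : Set G))
      simp [hδ, hkg, hx]
  rw [← hspan] at hδV
  obtain ⟨c, hc⟩ := (Submodule.mem_span_range_iff_exists_fun ℂ).mp hδV
  have hcoef : ∀ Y : ↥S.parts,
      c Y * ((Fintype.card G : ℂ) * S.sigma Y.1 1) = (starRingEnd ℂ) (S.sigma Y.1 g) := by
    intro Y
    rw [← hBexp c Y, hc]
    rw [Finset.sum_eq_single g]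
    · simp [hδ]
    · intro x _ hne; simp [hδ, hne]
    · intro hc'; exact absurd (Finset.mem_univ g) hc'
  have heval : ∑ i : ↥S.parts, c i * S.sigma i.1 g = 1 := by
    have := congrFun hc g
    rw [Finset.sum_apply] at this
    simp only [Pi.smul_apply, smul_eq_mul, hv, hδ, if_pos rfl] at this
    exact this
  -- turn into a real identity
  have hterm : ∀ i : ↥S.parts, c i * S.sigma i.1 g =
      ((Complex.normSq (S.sigma i.1 g) / ((Fintype.card G : ℝ) * (S.sigma i.1 1).re) : ℝ) : ℂ) := by
    intro i
    have hd : ((Fintype.card G : ℂ) * S.sigma i.1 1) ≠ 0 := mul_ne_zero hcard0 (hσne i)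
    have hci : c i = (starRingEnd ℂ) (S.sigma i.1 g) / ((Fintype.card G : ℂ) * S.sigma i.1 1) :=
      eq_div_of_mul_eq hd (hcoef i)
    rw [hci, div_mul_eq_mul_div, mul_comm, Complex.mul_conj]
    rw [(S.sigma_one_real i.2).1]
    push_cast
    rfl
  have hreal1 : ∑ X ∈ S.parts,
      Complex.normSq (S.sigma X g) / ((Fintype.card G : ℝ) * (S.sigma X 1).re) = 1 := by
    have h1 : ((∑ X ∈ S.parts,
        Complex.normSq (S.sigma X g) / ((Fintype.card G : ℝ) * (S.sigma X 1).re) : ℝ) : ℂ) = 1 := by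
      rw [Complex.ofReal_sum, ← Finset.sum_coe_sort S.parts
        (fun X => ((Complex.normSq (S.sigma X g) / ((Fintype.card G : ℝ) * (S.sigma X 1).re) : ℝ) : ℂ))]
      rw [← Finset.sum_congr rfl fun i _ => hterm i]
      exact heval
    exact_mod_cast h1
  have hreal2 : ∑ X ∈ S.parts, (S.sigma X 1).re / (Fintype.card G : ℝ) = 1 := by
    rw [← Finset.sum_div]
    have : ∑ X ∈ S.parts, (S.sigma X 1).re = (Fintype.card G : ℝ) := by
      have := congrArg Complex.re S.card_eq_sum_sigma_one
      rw [Complex.re_sum] at this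
      simpa using this.symm
    rw [this]
    field_simp
  have hcardR : (0 : ℝ) < (Fintype.card G : ℝ) := by exact_mod_cast Fintype.card_pos
  have hle : ∀ X ∈ S.parts,
      Complex.normSq (S.sigma X g) / ((Fintype.card G : ℝ) * (S.sigma X 1).re)
        ≤ (S.sigma X 1).re / (Fintype.card G : ℝ) := by
    intro X hX
    have hm := (S.sigma_one_real hX).2
    have habs := S.abs_sigma_le hX g
    rw [div_le_div_iff₀ (by positivity) hcardR]
    have hnormSq : Complex.normSq (S.sigma X g) = ‖S.sigma X g‖ ^ 2 :=
      (Complex.sq_norm _).symm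
    rw [hnormSq]
    exact aux_le (norm_nonneg _) habs hcardR.le
  have heach := (Finset.sum_eq_sum_iff_of_le hle).mp (hreal1.trans hreal2.symm)
  intro X hX
  have hm := (S.sigma_one_real hX).2
  have habs := S.abs_sigma_le hX g
  have hX' := heach X hX
  rw [div_eq_div_iff (by positivity) hcardR.ne'] at hX'
  have hr : ‖S.sigma X g‖ = (S.sigma X 1).re := by
    have hnormSq : Complex.normSq (S.sigma X g) = ‖S.sigma X g‖ ^ 2 :=
      (Complex.sq_norm _).symm
    rw [hnormSq] at hX'
    exact aux_eq (norm_nonneg _) hm hcardR hX'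
  rw [hr, ← (S.sigma_one_real hX).1]

end SCTc

/-- `Z(S)` is the intersection of the centers `Z(χ) = {g : |χ(g)| = χ(1)}` of the
supercharacters `χ ∈ Ch(S)`. -/
theorem center_eq_iInter_char_centers {G : Type*} [Group G] [Fintype G] (S : SCTc G) :
    {g : G | S.cl g = {g}} =
      ⋂ X ∈ (S.parts : Set (Finset (G → ℂ))),
        {g : G | (‖S.sigma X g‖ : ℂ) = S.sigma X 1} := by
  ext g
  simp only [Set.mem_setOf_eq, Set.mem_iInter, Finset.mem_coe]
  constructor
  · intro hg X hX
    exact S.abs_eq hg X hX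
  · intro h
    exact S.eq_singleton (fun X hX => h X hX)
end

section
/- Let S be a supercharacter theory of a finite group G and H ≤ G. Then the smallest S-normal subgroup of G containing H equals H·[H,S], where [H,S] = ⟨g⁻¹k : g ∈ H, k ∈ cl_S(g)⟩. In particular, [H,S] is a normal subgroup of G. -/
open scoped Pointwise

theorem sClosure_eq_mul_comm {G : Type*} [Group G] [Finite G]
    (S : SCT G) (H : Subgroup G) :
    (S.comm (H : Set G)).Normal ∧
      ((sInf {N : Subgroup G | H ≤ N ∧ S.IsSNormal N} : Subgroup G) : Set G) =
        (H : Set G) * (S.comm (H : Set G) : Set G) := by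
  set gen : Set G := {x : G | ∃ g ∈ (H : Set G), ∃ k ∈ S.cl g, x = g⁻¹ * k} with hgen
  set K : Subgroup G := S.comm (H : Set G) with hK
  have hgenK : ∀ g ∈ H, ∀ k ∈ S.cl g, g⁻¹ * k ∈ K := fun g hg k hk =>
    Subgroup.subset_closure ⟨g, hg, k, hk, rfl⟩
  -- K is normal
  have hnorm : K.Normal := by
    constructor
    intro n hn x
    induction hn using Subgroup.closure_induction with
    | mem y hy =>
      obtain ⟨g, hg, k, hk, rfl⟩ := hy
      have h1 : g⁻¹ * (x * k * x⁻¹) ∈ K := hgenK g hg _ (S.conj_mem x hk)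
      have h2 : g⁻¹ * (x * g * x⁻¹) ∈ K := hgenK g hg _ (S.conj_mem x (S.mem_cl g))
      have : x * (g⁻¹ * k) * x⁻¹ = (g⁻¹ * (x * g * x⁻¹))⁻¹ * (g⁻¹ * (x * k * x⁻¹)) := by
        group
      rw [this]
      exact mul_mem (inv_mem h2) h1
    | one => simpa using one_mem K
    | mul a b _ _ ha hb =>
      have : x * (a * b) * x⁻¹ = (x * a * x⁻¹) * (x * b * x⁻¹) := by group
      rw [this]; exact mul_mem ha hb
    | inv a _ ha =>
      have : x * a⁻¹ * x⁻¹ = (x * a * x⁻¹)⁻¹ := by group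
      rw [this]; exact inv_mem ha
  haveI := hnorm
  set N : Subgroup G := H ⊔ K with hN
  have hNset : ((N : Set G)) = (H : Set G) * (K : Set G) := Subgroup.mul_normal H K
  -- cl g ⊆ N for g ∈ H
  have hHcl : ∀ g ∈ H, S.cl g ⊆ (N : Set G) := by
    intro g hg m hm
    have : m = g * (g⁻¹ * m) := by group
    rw [this]
    exact mul_mem (Subgroup.mem_sup_left hg) (Subgroup.mem_sup_right (hgenK g hg m hm))
  -- the subgroup of elements whose class lies in N
  let T : Subgroup G :=
    { carrier := {x : G | S.cl x ⊆ (N : Set G)}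
      one_mem' := by
        simp only [Set.mem_setOf_eq, S.cl_one]
        intro x hx
        simp only [Set.mem_singleton_iff] at hx
        subst hx; exact one_mem N
      mul_mem' := by
        intro a b ha hb
        simp only [Set.mem_setOf_eq] at *
        have hab : a * b ∈ S.cl a * S.cl b :=
          Set.mul_mem_mul (S.mem_cl a) (S.mem_cl b)
        intro m hm
        obtain ⟨u, hu, v, hv, rfl⟩ := S.cl_mul_subset hab hm
        exact mul_mem (ha hu) (hb hv)
      inv_mem' := by
        intro a ha
        simp only [Set.mem_setOf_eq] at *
        intro m hm
        have : m⁻¹ ∈ S.cl a⁻¹⁻¹ := S.cl_inv hm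
        rw [inv_inv] at this
        have := ha this
        simpa using inv_mem this }
  have hHT : ∀ g ∈ H, g ∈ T := fun g hg => hHcl g hg
  have hKT : K ≤ T := by
    rw [hK, SCT.comm, Subgroup.closure_le]
    rintro x ⟨g, hg, k, hk, rfl⟩
    have hgT : g ∈ T := hHT g hg
    have hkT : k ∈ T := by
      show S.cl k ⊆ (N : Set G)
      rw [S.cl_eq_of_mem hk]
      exact hHcl g hg
    exact mul_mem (inv_mem hgT) hkT
  have hNT : N ≤ T := sup_le (fun g hg => hHT g hg) hKT
  have hNnormal : S.IsSNormal N := fun g hg => hNT hg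
  have hle : ∀ N' ∈ {N : Subgroup G | H ≤ N ∧ S.IsSNormal N}, N ≤ N' := by
    rintro N' ⟨hHN', hSN'⟩
    refine sup_le hHN' ?_
    rw [hK, SCT.comm, Subgroup.closure_le]
    rintro x ⟨g, hg, k, hk, rfl⟩
    exact mul_mem (inv_mem (hHN' hg)) (hSN' g (hHN' hg) hk)
  have hmem : N ∈ {N : Subgroup G | H ≤ N ∧ S.IsSNormal N} := ⟨le_sup_left, hNnormal⟩
  have : sInf {N : Subgroup G | H ≤ N ∧ S.IsSNormal N} = N :=
    le_antisymm (sInf_le hmem) (le_sInf hle)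
  exact ⟨hnorm, by rw [this, hNset]⟩
end

section
/- Let S be a supercharacter theory of a finite group G, and let N be an S-normal subgroup with N ≤ Z(S). Then for every g ∈ G, the quantity |cl_S(g)| / |cl_{S_{G/N}}(gN)| is a positive integer dividing |N|, where cl_{S_{G/N}}(gN) is the image of cl_S(g) under the projection G → G/N. -/
open scoped Pointwise

theorem class_ratio_divides_central_normal {G : Type*} [Group G] [Finite G]
    (S : SCT G) (N : Subgroup G) (hN : S.IsSNormal N)
    (hNZ : ∀ n ∈ N, S.cl n = {n}) (g : G) :
    ∃ d : ℕ, 0 < d ∧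
      Nat.card (S.cl g) = d * Nat.card ((QuotientGroup.mk : G → G ⧸ N) '' S.cl g) ∧
      d ∣ Nat.card N := by
  classical
  haveI : Fintype G := Fintype.ofFinite G
  -- inverses of "central" elements have singleton classes
  have hinv : ∀ {z : G}, z ∈ N → S.cl z⁻¹ = {z⁻¹} := by
    intro z hz
    refine Set.eq_singleton_iff_unique_mem.mpr ⟨S.mem_cl _, ?_⟩
    intro k hk
    have h := S.cl_inv hk
    rw [inv_inv, hNZ z hz, Set.mem_singleton_iff] at h
    rw [← h, inv_inv]
  -- one inclusion of translation
  have hsub : ∀ {z : G}, S.cl z = {z} → ∀ x : G, S.cl (z * x) ⊆ (fun y => z * y) '' S.cl x := by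
    intro z hz x
    have h1 : z * x ∈ S.cl z * S.cl x := Set.mul_mem_mul (S.mem_cl z) (S.mem_cl x)
    intro y hy
    obtain ⟨a, ha, b, hb, rfl⟩ := S.cl_mul_subset h1 hy
    rw [hz, Set.mem_singleton_iff] at ha
    subst ha
    exact ⟨b, hb, rfl⟩
  -- translation by elements of N
  have hcl : ∀ {z : G}, z ∈ N → ∀ x : G, S.cl (z * x) = (fun y => z * y) '' S.cl x := by
    intro z hz x
    refine subset_antisymm (hsub (hNZ z hz) x) ?_
    have h2 := hsub (hinv hz) (z * x)
    rw [inv_mul_cancel_left] at h2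
    rintro y ⟨b, hb, rfl⟩
    obtain ⟨w, hw, hwb⟩ := h2 hb
    simp only at hwb
    rw [← hwb]
    simpa using hw
  -- key fiber fact
  have hfib : ∀ {k : G}, k ∈ S.cl g → ∀ {n : G}, n ∈ N →
      (n * k ∈ S.cl g ↔ n * g ∈ S.cl g) := by
    intro k hk n hn
    have h1 : S.cl (n * k) = S.cl (n * g) := by
      rw [hcl hn k, hcl hn g, S.cl_eq_of_mem hk]
    constructor
    · intro h
      have h2 := S.cl_eq_of_mem h
      rw [h1] at h2
      rw [← h2]; exact S.mem_cl _
    · intro h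
      have h2 := S.cl_eq_of_mem h
      rw [← h1] at h2
      rw [← h2]; exact S.mem_cl _
  -- N is central
  have hcen : ∀ {n : G}, n ∈ N → ∀ x : G, x * n = n * x := by
    intro n hn x
    have h := S.conj_mem x (S.mem_cl n)
    rw [hNZ n hn, Set.mem_singleton_iff] at h
    calc x * n = x * n * x⁻¹ * x := by group
    _ = n * x := by rw [h]
  -- the subgroup H
  let H : Subgroup G :=
    { carrier := {n : G | n ∈ N ∧ n * g ∈ S.cl g}
      one_mem' := ⟨N.one_mem, by simpa using S.mem_cl g⟩
      mul_mem' := by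
        rintro a b ⟨haN, hag⟩ ⟨hbN, hbg⟩
        refine ⟨N.mul_mem haN hbN, ?_⟩
        rw [mul_assoc]
        exact (hfib hbg haN).mpr hag
      inv_mem' := by
        rintro a ⟨haN, hag⟩
        exact ⟨N.inv_mem haN, (hfib hag (N.inv_mem haN)).mp (by simpa using S.mem_cl g)⟩ }
  have hHN : H ≤ N := fun n hn => hn.1
  refine ⟨Nat.card H, Nat.card_pos, ?_, Subgroup.card_dvd_of_le hHN⟩
  -- counting
  set f : G → G ⧸ N := QuotientGroup.mk with hf
  set s : Finset G := (S.cl g).toFinset with hs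
  set t : Finset (G ⧸ N) := s.image f with ht
  have hcount : s.card = ∑ b ∈ t, (s.filter fun x => f x = b).card :=
    Finset.card_eq_sum_card_fiberwise (fun x hx => Finset.mem_image_of_mem f hx)
  have hfibcard : ∀ b ∈ t, (s.filter fun x => f x = b).card = Nat.card H := by
    intro b hb
    obtain ⟨k, hk, rfl⟩ := Finset.mem_image.mp hb
    have hkcl : k ∈ S.cl g := by rwa [hs, Set.mem_toFinset] at hk
    have hHcard : Nat.card H = (H : Set G).toFinset.card :=
      Nat.card_eq_card_toFinset (H : Set G)
    rw [hHcard]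
    refine Finset.card_bij (fun x _ => x * k⁻¹) ?_ ?_ ?_
    · intro x hx
      rw [Finset.mem_filter, hs, Set.mem_toFinset] at hx
      obtain ⟨hxcl, hxf⟩ := hx
      have hkx : k⁻¹ * x ∈ N := by
        have := QuotientGroup.eq.mp hxf.symm
        exact this
      have hxk : x * k⁻¹ = k⁻¹ * x := by
        have := hcen hkx k
        calc x * k⁻¹ = k * (k⁻¹ * x) * k⁻¹ := by group
        _ = (k⁻¹ * x) * k * k⁻¹ := by rw [← this]
        _ = k⁻¹ * x := by group
      have hxkN : x * k⁻¹ ∈ N := by rw [hxk]; exact hkx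
      rw [Set.mem_toFinset]
      refine ⟨hxkN, ?_⟩
      have hx' : (x * k⁻¹) * k ∈ S.cl g := by simpa using hxcl
      exact (hfib hkcl hxkN).mp hx'
    · intro a _ b _ hab
      exact mul_right_cancel hab
    · intro n hn
      rw [Set.mem_toFinset] at hn
      obtain ⟨hnN, hng⟩ := hn
      refine ⟨n * k, ?_, by group⟩
      rw [Finset.mem_filter, hs, Set.mem_toFinset]
      refine ⟨(hfib hkcl hnN).mpr hng, ?_⟩
      have : (n * k)⁻¹ * k ∈ N := by
        have h1 : k⁻¹ * n⁻¹ * k = n⁻¹ := by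
          have := hcen (N.inv_mem hnN) k
          calc k⁻¹ * n⁻¹ * k = k⁻¹ * (n⁻¹ * k) := by group
          _ = k⁻¹ * (k * n⁻¹) := by rw [← this]
          _ = n⁻¹ := by group
        have h2 : (n * k)⁻¹ * k = n⁻¹ := by
          rw [mul_inv_rev, mul_assoc]
          rw [mul_assoc] at h1
          exact h1
        rw [h2]; exact N.inv_mem hnN
      exact QuotientGroup.eq.mpr this
  have hsum : s.card = t.card * Nat.card H := by
    rw [hcount, Finset.sum_congr rfl hfibcard, Finset.sum_const, smul_eq_mul]
  have h1 : Nat.card (S.cl g) = s.card := Nat.card_eq_card_toFinset _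
  have h2 : Nat.card (f '' S.cl g) = t.card := by
    rw [Nat.card_eq_card_toFinset, ht, hs, Set.toFinset_image]
  rw [h1, h2, hsum, mul_comm]
end

section
/- Let S and T be supercharacter theories of a finite group G. Then [G, S ∨ T] = [G,S]·[G,T], where S ∨ T is the join supercharacter theory whose classes form the mutual coarsening of the class partitions of S and T. -/
open scoped Pointwise

theorem comm_univ_normal {G : Type*} [Group G] (S : SCT G) :
    (S.comm Set.univ).Normal := by
  constructor
  intro n hn x
  induction hn using Subgroup.closure_induction with
  | mem y hy =>
    obtain ⟨g, -, k, hk, rfl⟩ := hy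
    apply Subgroup.subset_closure
    refine ⟨x * g * x⁻¹, trivial, x * k * x⁻¹, ?_, ?_⟩
    · rw [S.cl_eq_of_mem (S.conj_mem x (S.mem_cl g))]
      exact S.conj_mem x hk
    · group
  | one => simpa using (S.comm Set.univ).one_mem
  | mul a b _ _ ha hb =>
    have : x * (a * b) * x⁻¹ = (x * a * x⁻¹) * (x * b * x⁻¹) := by group
    rw [this]; exact mul_mem ha hb
  | inv a _ ha =>
    have : x * a⁻¹ * x⁻¹ = (x * a * x⁻¹)⁻¹ := by group
    rw [this]; exact inv_mem ha

theorem comm_le_of_cl_le {G : Type*} [Group G] (S U : SCT G)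
    (h : ∀ g : G, S.cl g ⊆ U.cl g) : S.comm Set.univ ≤ U.comm Set.univ := by
  apply Subgroup.closure_mono
  rintro x ⟨g, -, k, hk, rfl⟩
  exact ⟨g, trivial, k, h g hk, rfl⟩

/-- If `U` is the join supercharacter theory of `S` and `T`, then
`[G, S ∨ T] = [G,S] · [G,T]` (as sets, hence as subgroups). -/
theorem comm_join {G : Type*} [Group G] [Finite G] (S T U : SCT G)
    (hU : ∀ g : G, U.cl g =
      {h : G | Relation.EqvGen (fun a b : G => b ∈ S.cl a ∨ b ∈ T.cl a) g h}) :
    (U.comm Set.univ : Set G) = (S.comm Set.univ : Set G) * (T.comm Set.univ : Set G) := by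
  have hnorm : (S.comm Set.univ).Normal := comm_univ_normal S
  rw [← Subgroup.normal_mul]
  apply le_antisymm
  · apply (Subgroup.closure_le _).2
    rintro x ⟨g, -, k, hk, rfl⟩
    rw [hU g] at hk
    clear hU
    induction hk with
    | rel a b hab =>
      rcases hab with h | h
      · exact Subgroup.mem_sup_left (Subgroup.subset_closure ⟨a, trivial, b, h, rfl⟩)
      · exact Subgroup.mem_sup_right (Subgroup.subset_closure ⟨a, trivial, b, h, rfl⟩)
    | refl a => simpa using one_mem _
    | symm a b _ ih =>
      have : b⁻¹ * a = (a⁻¹ * b)⁻¹ := by group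
      rw [this]; exact inv_mem ih
    | trans a b c _ _ ih1 ih2 =>
      have : a⁻¹ * c = (a⁻¹ * b) * (b⁻¹ * c) := by group
      rw [this]; exact mul_mem ih1 ih2
  · apply SetLike.coe_subset_coe.mpr
    apply sup_le
    · exact comm_le_of_cl_le S U fun g k hk => by
        rw [hU g]; exact Relation.EqvGen.rel _ _ (Or.inl hk)
    · exact comm_le_of_cl_le T U fun g k hk => by
        rw [hU g]; exact Relation.EqvGen.rel _ _ (Or.inr hk)
end

section
/- Let S be a supercharacter theory of a finite group G and N an S-normal subgroup. Then [G,S] ≤ N if and only if every S-class maps to a singleton in G/N, i.e., Z(S_{G/N}) = G/N. -/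
open scoped Pointwise

theorem comm_le_iff_quotient_singletons {G : Type*} [Group G] [Finite G]
    (S : SCT G) (N : Subgroup G) (hN : S.IsSNormal N) :
    S.comm Set.univ ≤ N ↔
      ∀ g k : G, k ∈ S.cl g → (QuotientGroup.mk k : G ⧸ N) = QuotientGroup.mk g := by
  constructor
  · intro h g k hk
    rw [eq_comm, QuotientGroup.eq]
    exact h (Subgroup.subset_closure ⟨g, trivial, k, hk, rfl⟩)
  · intro h
    apply (Subgroup.closure_le _).2
    rintro x ⟨g, -, k, hk, rfl⟩
    simpa [← QuotientGroup.eq, eq_comm] using h g k hk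
end

section
/- Let S be a supercharacter theory of a finite group G, and let H and N be S-normal subgroups. Then [HN, S] = [H,S]·[N,S]. -/
open scoped Pointwise

namespace SCT

variable {G : Type*} [Group G]

theorem comm_mono (S : SCT G) {A B : Set G} (h : A ⊆ B) : S.comm A ≤ S.comm B :=
  Subgroup.closure_mono (fun x ⟨g, hg, k, hk, hx⟩ => ⟨g, h hg, k, hk, hx⟩)

theorem comm_normal (S : SCT G) (N : Subgroup G) (hN : S.IsSNormal N) :
    (S.comm (N : Set G)).Normal := by
  constructor
  intro n hn y
  induction hn using Subgroup.closure_induction with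
  | mem x hx =>
    obtain ⟨g, hg, k, hk, rfl⟩ := hx
    apply Subgroup.subset_closure
    refine ⟨y * g * y⁻¹, hN g hg (S.conj_mem y (S.mem_cl g)), y * k * y⁻¹, ?_, ?_⟩
    · rw [S.cl_eq_of_mem (S.conj_mem y (S.mem_cl g))]
      exact S.conj_mem y hk
    · group
  | one => simpa using Subgroup.one_mem _
  | mul a b _ _ ha hb =>
    have : y * (a * b) * y⁻¹ = (y * a * y⁻¹) * (y * b * y⁻¹) := by group
    rw [this]; exact Subgroup.mul_mem _ ha hb
  | inv a _ ha =>
    have : y * a⁻¹ * y⁻¹ = (y * a * y⁻¹)⁻¹ := by group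
    rw [this]; exact Subgroup.inv_mem _ ha

end SCT

theorem comm_mul_of_SNormal {G : Type*} [Group G] [Finite G]
    (S : SCT G) (H N : Subgroup G) (hH : S.IsSNormal H) (hN : S.IsSNormal N) :
    (S.comm ((H : Set G) * (N : Set G)) : Set G) =
      (S.comm (H : Set G) : Set G) * (S.comm (N : Set G) : Set G) := by
  have hHn := S.comm_normal H hH
  have hNn := S.comm_normal N hN
  have hset : (S.comm (H : Set G) : Set G) * (S.comm (N : Set G) : Set G)
      = ((S.comm (H : Set G) ⊔ S.comm (N : Set G) : Subgroup G) : Set G) :=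
    (Subgroup.mul_normal _ _).symm
  rw [hset]
  apply subset_antisymm
  · intro x hx
    refine (Subgroup.closure_le _).2 ?_ hx
    rintro z ⟨g, hg, k, hk, rfl⟩
    obtain ⟨h, hh, n, hn, rfl⟩ := hg
    have hk' : k ∈ S.cl h * S.cl n :=
      S.cl_mul_subset (Set.mul_mem_mul (S.mem_cl h) (S.mem_cl n)) hk
    obtain ⟨k₁, hk₁, k₂, hk₂, rfl⟩ := hk'
    have e : (h * n)⁻¹ * (k₁ * k₂) = (n⁻¹ * (h⁻¹ * k₁) * n) * (n⁻¹ * k₂) := by group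
    rw [e]
    have h1 : h⁻¹ * k₁ ∈ S.comm (H : Set G) :=
      Subgroup.subset_closure ⟨h, hh, k₁, hk₁, rfl⟩
    have h1' : n⁻¹ * (h⁻¹ * k₁) * n ∈ S.comm (H : Set G) := by
      have := hHn.conj_mem _ h1 n⁻¹
      simpa using this
    have h2 : n⁻¹ * k₂ ∈ S.comm (N : Set G) :=
      Subgroup.subset_closure ⟨n, hn, k₂, hk₂, rfl⟩
    exact Subgroup.mul_mem _ (Subgroup.mem_sup_left h1') (Subgroup.mem_sup_right h2)
  · have l1 : S.comm (H : Set G) ≤ S.comm ((H : Set G) * (N : Set G)) :=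
      S.comm_mono (fun x hx => ⟨x, hx, 1, Subgroup.one_mem N, mul_one x⟩)
    have l2 : S.comm (N : Set G) ≤ S.comm ((H : Set G) * (N : Set G)) :=
      S.comm_mono (fun x hx => ⟨1, Subgroup.one_mem H, x, hx, one_mul x⟩)
    exact SetLike.coe_subset_coe.2 (sup_le l1 l2)
end

section
/- Let S be a supercharacter theory of a finite group G and N an S-normal subgroup. Define γ_1(S) = G and γ_{i+1}(S) = [γ_i(S), S]. Then for every i ≥ 1, γ_i(S_{G/N}) = γ_i(S)N/N, where S_{G/N} is the quotient supercharacter theory. -/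
open scoped Pointwise

/-- The lower `S`-central series: `γ 0 = G` (this is `γ_1` in the paper) and
`γ (i+1) = [γ i, S]`. -/
def SCT.gammaSeries {G : Type*} [Group G] (S : SCT G) : ℕ → Subgroup G
  | 0 => ⊤
  | (i + 1) => S.comm ((SCT.gammaSeries S i : Subgroup G) : Set G)

theorem gamma_quotient {G : Type*} [Group G] [Finite G]
    (S : SCT G) (N : Subgroup G) [N.Normal] (hN : S.IsSNormal N)
    (T : SCT (G ⧸ N))
    (hT : ∀ g : G, T.cl (QuotientGroup.mk g) = (QuotientGroup.mk : G → G ⧸ N) '' S.cl g) :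
    ∀ i : ℕ, T.gammaSeries i = (S.gammaSeries i).map (QuotientGroup.mk' N) := by
  intro i
  induction i with
  | zero =>
    simp [SCT.gammaSeries, Subgroup.map_top_of_surjective _ (QuotientGroup.mk'_surjective N)]
  | succ i ih =>
    rw [SCT.gammaSeries, SCT.gammaSeries, ih]
    unfold SCT.comm
    rw [MonoidHom.map_closure]
    congr 1
    ext x
    constructor
    · rintro ⟨g, hg, k, hk, rfl⟩
      rw [Subgroup.coe_map] at hg
      obtain ⟨h, hH, rfl⟩ := hg
      rw [show (QuotientGroup.mk' N) h = QuotientGroup.mk h from rfl, hT] at hk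
      obtain ⟨k, hk, rfl⟩ := hk
      exact ⟨h⁻¹ * k, ⟨h, hH, k, hk, rfl⟩, by simp⟩
    · rintro ⟨x, ⟨g, hg, k, hk, rfl⟩, rfl⟩
      refine ⟨QuotientGroup.mk' N g, Subgroup.mem_map_of_mem _ hg, QuotientGroup.mk' N k, ?_, by simp⟩
      rw [show (QuotientGroup.mk' N) g = QuotientGroup.mk g from rfl, hT]
      exact ⟨k, hk, rfl⟩
end
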